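/- For every rational number x and every integer n ≥ 0, V_n(x) = Σ_{k=0}^{n} C(x,k)² C(−1−x, n−k)² and V_n(x) = Σ_{k=0}^{n} C(n,k)C(n+k,k)(−1)^{n−k} G_k(x). -/

import Mathlib

open Finset

/-- Generalized binomial coefficient `C(x,k) = x(x-1)⋯(x-k+1)/k!` for rational `x`. -/
def qchoose (x : ℚ) (k : ℕ) : ℚ := (∏ i ∈ range k, (x - i)) / (Nat.factorial k)

/-- `r` is a `p`-integer: the denominator of `r` (in lowest terms) is not divisible by `p`. -/
def IsPInt (p : ℕ) (r : ℚ) : Prop := ¬ (p ∣ r.den)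

/-- `a ≡ b (mod p^k)` for rationals: `(a - b)/p^k` is a `p`-integer. -/
def RatCong (p k : ℕ) (a b : ℚ) : Prop := IsPInt p ((a - b) / (p : ℚ) ^ k)

/-- The Apéry-like sequence `G_n(x)`. -/
def G (n : ℕ) (x : ℚ) : ℚ :=
  ∑ k ∈ range (n + 1), (n.choose k : ℚ) * (-1) ^ k * qchoose x k * qchoose (-1 - x) k

/-- The Apéry-like sequence `V_n(x)`. -/
def V (n : ℕ) (x : ℚ) : ℚ :=
  ∑ k ∈ range (n + 1),
    (n.choose k : ℚ) * ((n + k).choose k : ℚ) * (-1) ^ k * qchoose x k * qchoose (-1 - x) k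

def Gn (n : ℕ) : ℚ := 16 ^ n * G n (-1/2)
def G3 (n : ℕ) : ℚ := 27 ^ n * G n (-1/3)
def G4 (n : ℕ) : ℚ := 64 ^ n * G n (-1/4)
def G6 (n : ℕ) : ℚ := 432 ^ n * G n (-1/6)

def Vn (n : ℕ) : ℚ := 16 ^ n * V n (-1/2)
def V3 (n : ℕ) : ℚ := 27 ^ n * V n (-1/3)
def V4 (n : ℕ) : ℚ := 64 ^ n * V n (-1/4)
def V6 (n : ℕ) : ℚ := 432 ^ n * V n (-1/6)

/-- Euler numbers: `E_0 = 1`, `E_{2n-1} = 0`, `E_{2n} = -∑_{k=1}^n C(2n,2k) E_{2n-2k}`. -/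
def eulerE : ℕ → ℚ
  | 0 => 1
  | (n + 1) =>
    if (n + 1) % 2 = 1 then 0
    else -∑ k ∈ range ((n + 1) / 2),
        ((n + 1).choose (2 * (k + 1)) : ℚ) * eulerE (n + 1 - 2 * (k + 1))
decreasing_by omega

/-- The sequence `U_n`: `U_0 = 1`, `U_{2n-1} = 0`, `U_{2n} = -2∑_{k=1}^n C(2n,2k) U_{2n-2k}`. -/
def seqU : ℕ → ℚ
  | 0 => 1
  | (n + 1) =>
    if (n + 1) % 2 = 1 then 0
    else -2 * ∑ k ∈ range ((n + 1) / 2),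
        ((n + 1).choose (2 * (k + 1)) : ℚ) * seqU (n + 1 - 2 * (k + 1))
decreasing_by omega

/-- The sequence `s_n`: `s_0 = 1`, `s_n = 1 - ∑_{k=0}^{n-1} C(n,k) 2^{2n-1-2k} s_k`. -/
def seqS : ℕ → ℚ
  | 0 => 1
  | (n + 1) => 1 - ∑ k ∈ (range (n + 1)).attach,
      ((n + 1).choose k.1 : ℚ) * 2 ^ (2 * (n + 1) - 1 - 2 * k.1) * seqS k.1
decreasing_by exact mem_range.mp k.2

/-- Euler polynomials `E_n(x) = 2^{-n} ∑_{k=0}^n C(n,k) (2x-1)^{n-k} E_k`. -/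
def eulerPoly (n : ℕ) (x : ℚ) : ℚ :=
  (∑ k ∈ range (n + 1), (n.choose k : ℚ) * (2 * x - 1) ^ (n - k) * eulerE k) / 2 ^ n

/-- Harmonic numbers `H_n`. -/
def harm (n : ℕ) : ℚ := ∑ k ∈ range n, 1 / ((k : ℚ) + 1)

/-- Legendre/Jacobi symbol of a rational number whose denominator is coprime to `p`. -/
def qLegendre (r : ℚ) (p : ℕ) : ℤ := jacobiSym (r.num * r.den) p

/-- `(B_{p²(p-1)}(-x) - B_{p²(p-1)})/(p²(p-1))`. -/
noncomputable def bratio (p : ℕ) (x : ℚ) : ℚ :=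
  ((Polynomial.bernoulli (p ^ 2 * (p - 1))).eval (-x) - bernoulli (p ^ 2 * (p - 1))) /
    ((p : ℚ) ^ 2 * ((p : ℚ) - 1))

/-- Franel numbers. -/
def franel (n : ℕ) : ℚ := ∑ k ∈ range (n + 1), (n.choose k : ℚ) ^ 3

def aseq (n : ℕ) : ℚ := ∑ k ∈ range (n + 1), (n.choose k : ℚ) ^ 2 * ((2 * k).choose k : ℚ)

def Qseq (n : ℕ) : ℚ := ∑ k ∈ range (n + 1), (n.choose k : ℚ) * (-8) ^ (n - k) * franel k

/-!
Both sides of the first identity are polynomials in `x`, so it suffices to prove it for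
`x = m ∈ ℕ`. There `V_n(m) = ∑ C(m,k) C(m+k,k) C(n,k) C(n+k,k)`, and the right-hand side
becomes `∑ C(m,k)² C(n+k,m)²`. Creative telescoping in `k` shows that both, as functions of
`(m, n)`, are annihilated by one two-variable recurrence operator whose leading coefficient never
vanishes, and both equal `1` on the axes `m = 0` and `n = 0`; hence they agree everywhere.

The second identity is Legendre inversion: expanding `G_k` and exchanging the sums reduces it to
`∑_k (-1)^(n-k) C(n,k) C(n+k,k) C(k,j) = C(n,j) C(n+j,j)`, which is the `(n-j)`-th forward
difference of `y ↦ C(y,n)` at `y = n + j`.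
-/

open Polynomial

@[simp] lemma qchoose_zero (x : ℚ) : qchoose x 0 = 1 := by simp [qchoose]

lemma qchoose_succ (x : ℚ) (k : ℕ) : qchoose x (k + 1) = qchoose x k * (x - k) / (k + 1) := by
  simp only [qchoose, prod_range_succ, Nat.factorial_succ]
  push_cast
  field_simp

lemma qchoose_add_one_succ (x : ℚ) (k : ℕ) :
    qchoose (x + 1) (k + 1) = (x + 1) * qchoose x k / (k + 1) := by
  simp only [qchoose, prod_range_succ', Nat.factorial_succ]
  push_cast
  simp only [add_sub_add_right_eq_sub, sub_zero]
  field_simp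

lemma qchoose_add_one_mul (x : ℚ) (k : ℕ) :
    qchoose (x + 1) k * (x + 1 - k) = (x + 1) * qchoose x k := by
  have h := prod_range_succ' (fun i : ℕ => x + 1 - i) k
  rw [prod_range_succ] at h
  simp only [Nat.cast_add, Nat.cast_one, add_sub_add_right_eq_sub, Nat.cast_zero, sub_zero] at h
  rw [qchoose, qchoose, div_mul_eq_mul_div, h]
  ring

lemma qchoose_eq_mul_div {x : ℚ} (hx : x + 1 ≠ 0) (k : ℕ) :
    qchoose x k = qchoose (x + 1) k * (x + 1 - k) / (x + 1) := by
  rw [qchoose_add_one_mul, mul_div_cancel_left₀ _ hx]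

lemma qchoose_eq_zero_of_lt {m k : ℕ} (h : m < k) : qchoose m k = 0 := by
  rw [qchoose, prod_eq_zero (i := m) (mem_range.2 h) (sub_self _), zero_div]

lemma qchoose_eq_ringChoose (x : ℚ) (k : ℕ) : qchoose x k = Ring.choose x k := by
  rw [Ring.choose_eq_smul, ← aeval_eq_smeval, ← eval_map_algebraMap, descPochhammer_map,
    descPochhammer_eval_eq_prod_range, qchoose, smul_eq_mul, div_eq_inv_mul]

lemma qchoose_natCast (m k : ℕ) : qchoose m k = m.choose k := by
  rw [qchoose_eq_ringChoose, Ring.choose_natCast]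

lemma qchoose_neg_one_sub (x : ℚ) (k : ℕ) :
    qchoose (-1 - x) k = (-1) ^ k * qchoose (x + k) k := by
  rw [qchoose_eq_ringChoose, qchoose_eq_ringChoose, show -1 - x = -(x + 1) by ring,
    Ring.choose_neg, show x + 1 + k - 1 = x + k by ring, Units.smul_def,
    Int.coe_negOnePow_natCast, zsmul_eq_mul]
  push_cast
  rfl

noncomputable def qchoosePoly (k : ℕ) : ℚ[X] := C (k.factorial : ℚ)⁻¹ * descPochhammer ℚ k

@[simp] lemma eval_qchoosePoly (x : ℚ) (k : ℕ) : (qchoosePoly k).eval x = qchoose x k := by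
  rw [qchoosePoly, eval_mul, eval_C, descPochhammer_eval_eq_prod_range, qchoose, inv_mul_eq_div]

/-- Annihilates both `(m, n) ↦ V_n(m)` and `(m, n) ↦ ∑ C(m,k)² C(n+k,m)²`. This operator and the
certificates `legCert`, `sqCert` below were found by creative telescoping. -/
def aperyOp (u : ℕ → ℕ → ℚ) (M N : ℕ) : ℚ :=
  (3 * (M + 1 : ℚ) ^ 2 - 4 * (M + 1) * (N + 1) + 3 * (N + 1) ^ 2) * u (M + 1) (N + 1)
    - (3 * (M + 1 : ℚ) ^ 2 + 2 * (M + 1) * (N + 1) + (N + 1) ^ 2) * u M (N + 1)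
    - ((M + 1 : ℚ) ^ 2 + 2 * (M + 1) * (N + 1) + 3 * (N + 1) ^ 2) * u (M + 1) N
    + ((M + 1 : ℚ) ^ 2 + (N + 1) ^ 2) * u M N

def legCoeff (y : ℚ) (k : ℕ) : ℚ := qchoose y k * qchoose (y + k) k

def legWeight (y : ℚ) (k : ℕ) : ℚ := qchoose (y + 1) k * qchoose (y + k) k / (y + 1)

section legWeight

variable {y : ℚ} (hy : y + 1 ≠ 0) (k : ℕ)
include hy

lemma legCoeff_eq_legWeight_mul : legCoeff y k = legWeight y k * (y + 1 - k) := by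
  rw [legCoeff, legWeight, qchoose_eq_mul_div hy]
  ring

lemma legCoeff_add_one_eq_legWeight_mul : legCoeff (y + 1) k = legWeight y k * (y + 1 + k) := by
  have h := qchoose_add_one_mul (y + k) k
  rw [show y + k + 1 - k = y + 1 by ring] at h
  rw [legCoeff, legWeight, add_right_comm y 1, eq_div_of_mul_eq hy h]
  ring

lemma legWeight_succ :
    legWeight y (k + 1) = legWeight y k * ((y + 1) ^ 2 - k ^ 2) / (k + 1) ^ 2 := by
  rw [legWeight, legWeight, Nat.cast_succ, ← add_assoc, qchoose_succ, qchoose_add_one_succ]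
  field_simp
  ring

end legWeight

def legCert (M N k : ℕ) : ℚ := -8 * k ^ 4 * legWeight M k * legWeight N k

lemma aperyOp_legCoeff_mul (M N k : ℕ) :
    aperyOp (fun m n => legCoeff m k * legCoeff n k) M N
      = legCert M N (k + 1) - legCert M N k := by
  have hM : (M : ℚ) + 1 ≠ 0 := by positivity
  have hN : (N : ℚ) + 1 ≠ 0 := by positivity
  simp only [aperyOp, legCert, Nat.cast_add, Nat.cast_one]
  rw [legCoeff_eq_legWeight_mul hM, legCoeff_eq_legWeight_mul hN,
    legCoeff_add_one_eq_legWeight_mul hM, legCoeff_add_one_eq_legWeight_mul hN,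
    legWeight_succ hM, legWeight_succ hN]
  field_simp
  ring

def sqTerm (m : ℕ) (y : ℚ) (k : ℕ) : ℚ := qchoose m k * qchoose (y + k) m

def sqWeight (M : ℕ) (y : ℚ) (k : ℕ) : ℚ :=
  qchoose (M + 1) k * qchoose (y + k + 1) M / (M + 1)

section sqWeight

variable (M : ℕ) (y : ℚ) (k : ℕ)

lemma sqTerm_succ_add_one :
    sqTerm (M + 1) (y + 1) k = sqWeight M y k * (y + k + 1 - M) := by
  rw [sqTerm, sqWeight, add_right_comm y 1, Nat.cast_succ, qchoose_succ]
  ring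

lemma sqTerm_add_one :
    sqTerm M (y + 1) k = sqWeight M y k * (M + 1 - k) := by
  rw [sqTerm, sqWeight, add_right_comm y 1, qchoose_eq_mul_div (x := M) (by positivity)]
  ring

variable {y} (hy : y + k + 1 ≠ 0)
include hy

lemma sqTerm_succ :
    sqTerm (M + 1) y k = sqWeight M y k * (y + k + 1 - M) * (y + k - M) / (y + k + 1) := by
  rw [sqTerm, sqWeight, Nat.cast_succ, qchoose_succ, qchoose_eq_mul_div hy]
  ring

lemma sqTerm_eq_sqWeight_mul :
    sqTerm M y k = sqWeight M y k * (M + 1 - k) * (y + k + 1 - M) / (y + k + 1) := by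
  rw [sqTerm, sqWeight, qchoose_eq_mul_div hy, qchoose_eq_mul_div (x := M) (by positivity)]
  ring

end sqWeight

/-- `k * C(M+1,k) / (M+1)` is `C(M,k-1)`, written so that it vanishes at `k = 0`. -/
def sqCert (M N k : ℕ) : ℚ :=
  (4 * k ^ 2 - 8 * ((M : ℚ) - N) * k + (M + 1) ^ 2 - 10 * (M + 1) * (N + 1) + 3 * (N + 1) ^ 2)
    * (k * qchoose (M + 1) k * qchoose (N + k) M / (M + 1)) ^ 2

lemma aperyOp_sqTerm_sq (M N k : ℕ) :
    aperyOp (fun m n => sqTerm m n k ^ 2) M N = sqCert M N (k + 1) - sqCert M N k := by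
  have hM : (M : ℚ) + 1 ≠ 0 := by positivity
  have hs : (N : ℚ) + k + 1 ≠ 0 := by positivity
  simp only [aperyOp, sqCert, Nat.cast_add, Nat.cast_one]
  rw [sqTerm_succ_add_one, sqTerm_add_one, sqTerm_succ M k hs, sqTerm_eq_sqWeight_mul M k hs,
    qchoose_succ (M + 1) k, ← add_assoc, qchoose_eq_mul_div hs M, sqWeight]
  field_simp
  ring

lemma aperyOp_eq_zero_of_telescoping {u : ℕ → ℕ → ℚ} {t : ℕ → ℕ → ℕ → ℚ} {g : ℕ → ℚ}
    {M N K : ℕ} (hu : ∀ m n, m ≤ M + 1 → n ≤ N + 1 → u m n = ∑ k ∈ range K, t m n k)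
    (ht : ∀ k, aperyOp (fun m n => t m n k) M N = g (k + 1) - g k) (hg0 : g 0 = 0)
    (hgK : g K = 0) : aperyOp u M N = 0 := by
  calc aperyOp u M N = ∑ k ∈ range K, aperyOp (fun m n => t m n k) M N := by
        rw [aperyOp, hu _ _ le_rfl le_rfl, hu M (N + 1) (by omega) le_rfl,
          hu (M + 1) N le_rfl (by omega), hu M N (by omega) (by omega)]
        simp only [aperyOp, mul_sum, ← sum_sub_distrib, ← sum_add_distrib]
    _ = 0 := by rw [sum_congr rfl fun k _ => ht k, sum_range_sub, hgK, hg0, sub_zero]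

lemma eq_of_aperyOp_eq_zero {u v : ℕ → ℕ → ℚ} (hu : ∀ M N, aperyOp u M N = 0)
    (hv : ∀ M N, aperyOp v M N = 0) (hm : ∀ n, u 0 n = v 0 n) (hn : ∀ m, u m 0 = v m 0)
    (m n : ℕ) : u m n = v m n := by
  induction m generalizing n with
  | zero => exact hm n
  | succ M ihM =>
    induction n with
    | zero => exact hn _
    | succ N ihN =>
      have hlead : 3 * ((M : ℚ) + 1) ^ 2 - 4 * (M + 1) * (N + 1) + 3 * (N + 1) ^ 2
          = 2 * ((M : ℚ) - N) ^ 2 + (M + 1) ^ 2 + (N + 1) ^ 2 := by ring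
      have hpos : 0 < 3 * ((M : ℚ) + 1) ^ 2 - 4 * (M + 1) * (N + 1) + 3 * (N + 1) ^ 2 := by
        rw [hlead]; positivity
      have eu := hu M N
      have ev := hv M N
      rw [aperyOp] at eu ev
      refine mul_left_cancel₀ hpos.ne' ?_
      linear_combination eu - ev
        + (3 * ((M : ℚ) + 1) ^ 2 + 2 * (M + 1) * (N + 1) + (N + 1) ^ 2) * ihM (N + 1)
        + (((M : ℚ) + 1) ^ 2 + 2 * (M + 1) * (N + 1) + 3 * (N + 1) ^ 2) * ihN
        - (((M : ℚ) + 1) ^ 2 + (N + 1) ^ 2) * ihM N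

lemma legCoeff_natCast_eq_zero_of_lt {n k : ℕ} (h : n < k) : legCoeff n k = 0 := by
  rw [legCoeff, qchoose_eq_zero_of_lt h, zero_mul]

lemma V_eq_sum_legCoeff (n : ℕ) (x : ℚ) :
    V n x = ∑ k ∈ range (n + 1), legCoeff n k * legCoeff x k := by
  refine sum_congr rfl fun k _ => ?_
  have hsign : ((-1 : ℚ) ^ k) ^ 2 = 1 := by rw [pow_right_comm, neg_one_sq, one_pow]
  rw [legCoeff, legCoeff, qchoose_natCast, ← Nat.cast_add, qchoose_natCast, qchoose_neg_one_sub]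
  linear_combination (n.choose k * (n + k).choose k * qchoose x k * qchoose (x + k) k : ℚ) * hsign

lemma aperyOp_V (M N : ℕ) : aperyOp (fun m n => V n m) M N = 0 := by
  refine aperyOp_eq_zero_of_telescoping (K := N + 2) (fun m n _ hn => ?_)
    (aperyOp_legCoeff_mul M N) (by simp [legCert]) ?_
  · rw [V_eq_sum_legCoeff, eventually_constant_sum (fun k hk => ?_) (by omega : n + 1 ≤ N + 2)]
    · exact sum_congr rfl fun k _ => mul_comm _ _
    · rw [legCoeff_natCast_eq_zero_of_lt hk, mul_zero]
  · have : qchoose ((N : ℚ) + 1) (N + 2) = 0 := by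
      exact_mod_cast qchoose_eq_zero_of_lt (m := N + 1) (by omega)
    simp [legCert, legWeight, this]

def sqConv (n : ℕ) (x : ℚ) : ℚ :=
  ∑ k ∈ range (n + 1), qchoose x k ^ 2 * qchoose (-1 - x) (n - k) ^ 2

lemma sum_sq_choose_mul_choose_reflect (m n : ℕ) :
    ∑ k ∈ range (n + 1), (m.choose k * (m + n - k).choose m) ^ 2
      = ∑ k ∈ range (m + 1), (m.choose k * (n + k).choose m) ^ 2 := by
  calc _ = ∑ k ∈ range (m + n + 1), (m.choose k * (m + n - k).choose m) ^ 2 :=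
        (eventually_constant_sum (fun k hk => by
          rcases lt_or_ge m k with h | h
          · rw [Nat.choose_eq_zero_of_lt h, zero_mul, zero_pow two_ne_zero]
          · rw [Nat.choose_eq_zero_of_lt (by omega : m + n - k < m), mul_zero,
              zero_pow two_ne_zero])
          (by omega)).symm
    _ = ∑ k ∈ range (m + 1), (m.choose k * (m + n - k).choose m) ^ 2 :=
        eventually_constant_sum (fun k hk => by
          rw [Nat.choose_eq_zero_of_lt (by omega : m < k)]; simp) (by omega)
    _ = _ := by
        rw [← sum_range_reflect]
        refine sum_congr rfl fun k hk => ?_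
        have hk := mem_range.1 hk
        rw [show m + 1 - 1 - k = m - k by omega, Nat.choose_symm (by omega),
          show m + n - (m - k) = n + k by omega]

lemma sqTerm_natCast (m n k : ℕ) : sqTerm m n k = m.choose k * (n + k).choose m := by
  rw [sqTerm, qchoose_natCast, ← Nat.cast_add, qchoose_natCast]

lemma sqConv_natCast (m n : ℕ) : sqConv n m = ∑ k ∈ range (m + 1), sqTerm m n k ^ 2 := by
  calc sqConv n m
        = ∑ k ∈ range (n + 1), ((m.choose k * (m + n - k).choose m : ℕ) : ℚ) ^ 2 := by
        refine sum_congr rfl fun k hk => ?_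
        have hk := mem_range.1 hk
        rw [qchoose_neg_one_sub, ← Nat.cast_add, qchoose_natCast, qchoose_natCast, mul_pow,
          pow_right_comm, neg_one_sq, one_pow, one_mul, ← Nat.choose_symm_add,
          show m + (n - k) = m + n - k by omega]
        push_cast
        ring
    _ = ∑ k ∈ range (m + 1), ((m.choose k * (n + k).choose m : ℕ) : ℚ) ^ 2 := by
        exact_mod_cast sum_sq_choose_mul_choose_reflect m n
    _ = _ := by push_cast [sqTerm_natCast]; rfl

lemma aperyOp_sqConv (M N : ℕ) : aperyOp (fun m n => sqConv n m) M N = 0 := by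
  refine aperyOp_eq_zero_of_telescoping (K := M + 2) (fun m n hm _ => ?_)
    (aperyOp_sqTerm_sq M N) (by simp [sqCert]) ?_
  · rw [sqConv_natCast, eventually_constant_sum (fun k hk => ?_) (by omega : m + 1 ≤ M + 2)]
    rw [sqTerm, qchoose_eq_zero_of_lt hk, zero_mul, zero_pow two_ne_zero]
  · have : qchoose ((M : ℚ) + 1) (M + 2) = 0 := by
      exact_mod_cast qchoose_eq_zero_of_lt (m := M + 1) (by omega)
    simp [sqCert, this]

lemma V_natCast_eq_sqConv (m n : ℕ) : V n m = sqConv n m := by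
  refine eq_of_aperyOp_eq_zero (u := fun m n => V n m) (v := fun m n => sqConv n m)
    aperyOp_V aperyOp_sqConv (fun n => ?_) (fun m => by simp [V, sqConv]) m n
  rw [V_eq_sum_legCoeff, sum_range_succ',
    sum_eq_zero fun k _ => by rw [legCoeff_natCast_eq_zero_of_lt k.succ_pos, mul_zero],
    sqConv_natCast]
  simp [legCoeff, sqTerm]

noncomputable def VPoly (n : ℕ) : ℚ[X] :=
  ∑ k ∈ range (n + 1), C ((n.choose k : ℚ) * (n + k).choose k * (-1) ^ k) * qchoosePoly k
    * (qchoosePoly k).comp (C (-1) - X)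

noncomputable def sqConvPoly (n : ℕ) : ℚ[X] :=
  ∑ k ∈ range (n + 1), qchoosePoly k ^ 2 * ((qchoosePoly (n - k)).comp (C (-1) - X)) ^ 2

lemma eval_VPoly (n : ℕ) (x : ℚ) : (VPoly n).eval x = V n x := by
  simp [VPoly, V, eval_finsetSum]

lemma eval_sqConvPoly (n : ℕ) (x : ℚ) : (sqConvPoly n).eval x = sqConv n x := by
  simp [sqConvPoly, sqConv, eval_finsetSum]

theorem V_eq_sqConv (n : ℕ) (x : ℚ) : V n x = sqConv n x := by
  have h : VPoly n = sqConvPoly n := eq_of_infinite_eval_eq _ _ <|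
    Set.infinite_of_injective_forall_mem Nat.cast_injective fun m => by
      rw [Set.mem_ofPred_eq, eval_VPoly, eval_sqConvPoly, V_natCast_eq_sqConv]
  rw [← eval_VPoly, h, eval_sqConvPoly]

lemma sum_alternating_choose_mul_choose_add (d j y : ℕ) :
    ∑ i ∈ range (d + 1), (-1 : ℤ) ^ (d - i) * d.choose i * (y + i).choose (d + j)
      = y.choose j := by
  have h := fwdDiff_iter_eq_sum_shift (h := 1) (fun x : ℕ => (x.choose (d + j) : ℤ)) d y
  rw [fwdDiff_iter_choose] at h
  simpa using h.symm

lemma sum_alternating_legendre_mul_choose {n j : ℕ} (hj : j ≤ n) :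
    ∑ k ∈ range (n + 1), (-1 : ℚ) ^ (n - k) * n.choose k * (n + k).choose k * k.choose j
      = n.choose j * (n + j).choose j := by
  have key : ∑ i ∈ range (n - j + 1),
      (-1 : ℚ) ^ (n - j - i) * (n - j).choose i * (n + j + i).choose n = (n + j).choose j := by
    have h := sum_alternating_choose_mul_choose_add (n - j) j (n + j)
    rw [Nat.sub_add_cancel hj] at h
    exact_mod_cast h
  rw [show n + 1 = j + (n - j + 1) by omega, sum_range_add,
    sum_eq_zero fun k hk => by rw [Nat.choose_eq_zero_of_lt (mem_range.1 hk)]; simp, zero_add]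
  calc _ = (n.choose j : ℚ) * ∑ i ∈ range (n - j + 1),
        (-1 : ℚ) ^ (n - j - i) * (n - j).choose i * (n + j + i).choose n := by
        rw [mul_sum]
        refine sum_congr rfl fun i _ => ?_
        have hc : (n.choose (j + i) * (j + i).choose j : ℚ)
            = n.choose j * (n - j).choose i := by
          rw [← Nat.cast_mul, ← Nat.cast_mul, Nat.choose_mul (Nat.le_add_right j i),
            Nat.add_sub_cancel_left]
        rw [Nat.sub_sub, ← Nat.choose_symm_add (a := n), ← add_assoc]
        linear_combination (-1 : ℚ) ^ (n - (j + i)) * ((n + j + i).choose n : ℚ) * hc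
    _ = n.choose j * (n + j).choose j := by rw [key]

theorem V_eq_sum_G (n : ℕ) (x : ℚ) :
    V n x = ∑ k ∈ range (n + 1),
      (n.choose k : ℚ) * ((n + k).choose k : ℚ) * (-1) ^ (n - k) * G k x := by
  have hG : ∀ k ∈ range (n + 1), G k x
      = ∑ j ∈ range (n + 1), (k.choose j : ℚ) * (-1) ^ j * qchoose x j * qchoose (-1 - x) j :=
    fun k hk => (eventually_constant_sum (fun j hj => by
      rw [Nat.choose_eq_zero_of_lt (by omega)]; simp) (mem_range.1 hk)).symm
  rw [sum_congr rfl fun k hk => by rw [hG k hk, mul_sum], sum_comm, V]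
  refine sum_congr rfl fun j hj => ?_
  rw [← sum_alternating_legendre_mul_choose (Nat.lt_succ_iff.1 (mem_range.1 hj))]
  simp only [sum_mul]
  refine sum_congr rfl fun k _ => ?_
  ring

theorem stmt_9 (x : ℚ) (n : ℕ) :
    V n x = ∑ k ∈ range (n + 1), qchoose x k ^ 2 * qchoose (-1 - x) (n - k) ^ 2 ∧
    V n x = ∑ k ∈ range (n + 1),
      (n.choose k : ℚ) * ((n + k).choose k : ℚ) * (-1) ^ (n - k) * G k x :=
  ⟨V_eq_sqConv n x, V_eq_sum_G n x⟩
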